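/- Assume H is finite-dimensional and let α, β ∈ Aut_Hopf(H). Then End(H_{α,β}) = End(H_{βα⁻¹}) as algebras in _H𝒴𝒟^H, where H_{α,β} is viewed as an (α,β)-Yetter-Drinfeld module and H_{βα⁻¹} = H_{id,βα⁻¹} as an (id,βα⁻¹)-Yetter-Drinfeld module. -/

import Mathlib

open TensorProduct

noncomputable section

namespace GYD

variable (k H : Type) [Field k] [Ring H] [HopfAlgebra k H]

/-- `φ` is a Hopf algebra automorphism of `H` (a linear equivalence which is both an
algebra morphism and a coalgebra morphism). -/
def IsHopfAut (φ : H ≃ₗ[k] H) : Prop :=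
  (∀ x y : H, φ (x * y) = φ x * φ y) ∧ (φ 1 = 1) ∧
  (∀ h : H, Coalgebra.comul (R := k) (φ h)
      = TensorProduct.map φ.toLinearMap φ.toLinearMap (Coalgebra.comul (R := k) h)) ∧
  (∀ h : H, Coalgebra.counit (R := k) (φ h) = Coalgebra.counit (R := k) h)

/-- `Sinv` is a two-sided inverse of the antipode of `H`. -/
def IsAntipodeInv (Sinv : H → H) : Prop :=
  (∀ h : H, HopfAlgebra.antipode (R := k) (Sinv h) = h) ∧
  (∀ h : H, Sinv (HopfAlgebra.antipode (R := k) h) = h)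

/-- The data `(act, coact)` makes `M` an `(α, β)`-Yetter-Drinfeld module over `H`:
`M` is a left `H`-module, a right `H`-comodule, and the compatibility
`(h·m)₍₀₎ ⊗ (h·m)₍₁₎ = h₂·m₍₀₎ ⊗ β(h₃) m₍₁₎ α(Sinv(h₁))` holds (expressed via
arbitrary finite representations of `(Δ ⊗ id)(Δ h)` and of `coact m`). -/
def IsYD (Sinv α β : H → H) {M : Type} [AddCommGroup M] [Module k M]
    (act : H →ₗ[k] M →ₗ[k] M) (coact : M →ₗ[k] M ⊗[k] H) : Prop :=
  (∀ m : M, act 1 m = m) ∧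
  (∀ (g h : H) (m : M), act (g * h) m = act g (act h m)) ∧
  (∀ m : M, LinearMap.rTensor H coact (coact m)
      = (TensorProduct.assoc k M H H).symm
          (LinearMap.lTensor M (Coalgebra.comul (R := k)) (coact m))) ∧
  (∀ m : M,
    TensorProduct.rid k M (LinearMap.lTensor M (Coalgebra.counit (R := k)) (coact m)) = m) ∧
  (∀ (h : H) (m : M) (s t : Finset ℕ) (a b c : ℕ → H) (m₀ : ℕ → M) (m₁ : ℕ → H),
    LinearMap.rTensor H (Coalgebra.comul (R := k)) (Coalgebra.comul (R := k) h)
        = ∑ i ∈ s, (a i ⊗ₜ[k] b i) ⊗ₜ[k] c i →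
    coact m = ∑ j ∈ t, m₀ j ⊗ₜ[k] m₁ j →
    coact (act h m) = ∑ i ∈ s, ∑ j ∈ t,
      act (b i) (m₀ j) ⊗ₜ[k] (β (c i) * m₁ j * α (Sinv (a i))))

/-- Characterization of the action `h · (m ⊗ n) = θ₁(h₁)·m ⊗ θ₂(h₂)·n` on `M ⊗ N`. -/
def TensorActChar (θ₁ θ₂ : H → H) {M N : Type} [AddCommGroup M] [Module k M]
    [AddCommGroup N] [Module k N]
    (actM : H →ₗ[k] M →ₗ[k] M) (actN : H →ₗ[k] N →ₗ[k] N)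
    (act : H →ₗ[k] (M ⊗[k] N) →ₗ[k] (M ⊗[k] N)) : Prop :=
  ∀ (h : H) (m : M) (n : N) (s : Finset ℕ) (p q : ℕ → H),
    Coalgebra.comul (R := k) h = ∑ i ∈ s, p i ⊗ₜ[k] q i →
    act h (m ⊗ₜ[k] n) = ∑ i ∈ s, actM (θ₁ (p i)) m ⊗ₜ[k] actN (θ₂ (q i)) n

/-- Characterization of the "type two" action `h · (m ⊗ n) = h₂·m ⊗ h₁·n` on `M ⊗ N`. -/
def TensorActCharTwo {M N : Type} [AddCommGroup M] [Module k M]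
    [AddCommGroup N] [Module k N]
    (actM : H →ₗ[k] M →ₗ[k] M) (actN : H →ₗ[k] N →ₗ[k] N)
    (act : H →ₗ[k] (M ⊗[k] N) →ₗ[k] (M ⊗[k] N)) : Prop :=
  ∀ (h : H) (m : M) (n : N) (s : Finset ℕ) (p q : ℕ → H),
    Coalgebra.comul (R := k) h = ∑ i ∈ s, p i ⊗ₜ[k] q i →
    act h (m ⊗ₜ[k] n) = ∑ i ∈ s, actM (q i) m ⊗ₜ[k] actN (p i) n

/-- Characterization of the coaction `m ⊗ n ↦ (m₍₀₎ ⊗ n₍₀₎) ⊗ n₍₁₎ m₍₁₎` on `M ⊗ N`. -/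
def TensorCoactChar {M N : Type} [AddCommGroup M] [Module k M]
    [AddCommGroup N] [Module k N]
    (coactM : M →ₗ[k] M ⊗[k] H) (coactN : N →ₗ[k] N ⊗[k] H)
    (coact : M ⊗[k] N →ₗ[k] (M ⊗[k] N) ⊗[k] H) : Prop :=
  ∀ (m : M) (n : N) (s t : Finset ℕ) (m₀ : ℕ → M) (m₁ : ℕ → H) (n₀ : ℕ → N) (n₁ : ℕ → H),
    coactM m = ∑ i ∈ s, m₀ i ⊗ₜ[k] m₁ i →
    coactN n = ∑ j ∈ t, n₀ j ⊗ₜ[k] n₁ j →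
    coact (m ⊗ₜ[k] n) = ∑ i ∈ s, ∑ j ∈ t, (m₀ i ⊗ₜ[k] n₀ j) ⊗ₜ[k] (n₁ j * m₁ i)

/-- Characterization of the "type two" coaction `m ⊗ n ↦ (m₍₀₎ ⊗ n₍₀₎) ⊗ m₍₁₎ n₍₁₎`. -/
def TensorCoactCharTwo {M N : Type} [AddCommGroup M] [Module k M]
    [AddCommGroup N] [Module k N]
    (coactM : M →ₗ[k] M ⊗[k] H) (coactN : N →ₗ[k] N ⊗[k] H)
    (coact : M ⊗[k] N →ₗ[k] (M ⊗[k] N) ⊗[k] H) : Prop :=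
  ∀ (m : M) (n : N) (s t : Finset ℕ) (m₀ : ℕ → M) (m₁ : ℕ → H) (n₀ : ℕ → N) (n₁ : ℕ → H),
    coactM m = ∑ i ∈ s, m₀ i ⊗ₜ[k] m₁ i →
    coactN n = ∑ j ∈ t, n₀ j ⊗ₜ[k] n₁ j →
    coact (m ⊗ₜ[k] n) = ∑ i ∈ s, ∑ j ∈ t, (m₀ i ⊗ₜ[k] n₀ j) ⊗ₜ[k] (m₁ i * n₁ j)

/-- Characterization of the action `(h · f)(m) = f (θ(h) · m)` on the dual space. -/
def DualActChar (θ : H → H) {M : Type} [AddCommGroup M] [Module k M]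
    (actM : H →ₗ[k] M →ₗ[k] M)
    (actD : H →ₗ[k] Module.Dual k M →ₗ[k] Module.Dual k M) : Prop :=
  ∀ (h : H) (f : Module.Dual k M) (m : M), actD h f m = f (actM (θ h) m)

/-- Characterization of the coaction `f₍₀₎(m) ⊗ f₍₁₎ = f(m₍₀₎) ⊗ σ(m₍₁₎)` on the dual space
(expressed through contraction against evaluation at each `m`). -/
def DualCoactChar (σ : H → H) {M : Type} [AddCommGroup M] [Module k M]
    (coactM : M →ₗ[k] M ⊗[k] H)
    (coactD : Module.Dual k M →ₗ[k] Module.Dual k M ⊗[k] H) : Prop :=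
  ∀ (f : Module.Dual k M) (m : M) (t : Finset ℕ) (m₀ : ℕ → M) (m₁ : ℕ → H),
    coactM m = ∑ j ∈ t, m₀ j ⊗ₜ[k] m₁ j →
    TensorProduct.lid k H (LinearMap.rTensor H (Module.Dual.eval k M m) (coactD f))
      = ∑ j ∈ t, f (m₀ j) • σ (m₁ j)

/-- Characterization of the action `(h · u)(m) = θ(h₁) · u (θ(S(h₂)) · m)` on `End(M)`. -/
def EndActChar (θ : H → H) {M : Type} [AddCommGroup M] [Module k M]
    (actM : H →ₗ[k] M →ₗ[k] M)
    (actE : H →ₗ[k] Module.End k M →ₗ[k] Module.End k M) : Prop :=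
  ∀ (h : H) (u : Module.End k M) (m : M) (s : Finset ℕ) (p q : ℕ → H),
    Coalgebra.comul (R := k) h = ∑ i ∈ s, p i ⊗ₜ[k] q i →
    actE h u m = ∑ i ∈ s,
      actM (θ (p i)) (u (actM (θ (HopfAlgebra.antipode (R := k) (q i))) m))

/-- Characterization of the coaction `u₍₀₎(m) ⊗ u₍₁₎ = u(m₍₀₎)₍₀₎ ⊗ Sinv(m₍₁₎) u(m₍₀₎)₍₁₎`
on `End(M)`, expressed through contraction against evaluation at each `m`. -/
def EndCoactChar (Sinv : H → H) {M : Type} [AddCommGroup M] [Module k M]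
    (coactM : M →ₗ[k] M ⊗[k] H)
    (coactE : Module.End k M →ₗ[k] Module.End k M ⊗[k] H) : Prop :=
  ∀ (u : Module.End k M) (m : M) (t : Finset ℕ) (m₀ : ℕ → M) (m₁ : ℕ → H)
    (r : ℕ → Finset ℕ) (n₀ : ℕ → ℕ → M) (n₁ : ℕ → ℕ → H),
    coactM m = ∑ j ∈ t, m₀ j ⊗ₜ[k] m₁ j →
    (∀ j ∈ t, coactM (u (m₀ j)) = ∑ l ∈ r j, n₀ j l ⊗ₜ[k] n₁ j l) →
    LinearMap.rTensor H (LinearMap.applyₗ (R := k) m) (coactE u)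
      = ∑ j ∈ t, ∑ l ∈ r j, n₀ j l ⊗ₜ[k] (Sinv (m₁ j) * n₁ j l)

/-- Characterization of the action `(h · u)(m) = θ(h₂) · u (θ(Sinv(h₁)) · m)` on `End(M)ᵒᵖ`. -/
def EndOpActChar (θ Sinv : H → H) {M : Type} [AddCommGroup M] [Module k M]
    (actM : H →ₗ[k] M →ₗ[k] M)
    (actE : H →ₗ[k] (Module.End k M)ᵐᵒᵖ →ₗ[k] (Module.End k M)ᵐᵒᵖ) : Prop :=
  ∀ (h : H) (u : (Module.End k M)ᵐᵒᵖ) (m : M) (s : Finset ℕ) (p q : ℕ → H),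
    Coalgebra.comul (R := k) h = ∑ i ∈ s, p i ⊗ₜ[k] q i →
    (actE h u).unop m = ∑ i ∈ s,
      actM (θ (q i)) (u.unop (actM (θ (Sinv (p i))) m))

/-- Characterization of the coaction `u₍₀₎(m) ⊗ u₍₁₎ = u(m₍₀₎)₍₀₎ ⊗ u(m₍₀₎)₍₁₎ S(m₍₁₎)`
on `End(M)ᵒᵖ`, expressed through contraction against evaluation at each `m`. -/
def EndOpCoactChar {M : Type} [AddCommGroup M] [Module k M]
    (coactM : M →ₗ[k] M ⊗[k] H)
    (coactE : (Module.End k M)ᵐᵒᵖ →ₗ[k] (Module.End k M)ᵐᵒᵖ ⊗[k] H) : Prop :=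
  ∀ (u : (Module.End k M)ᵐᵒᵖ) (m : M) (t : Finset ℕ) (m₀ : ℕ → M) (m₁ : ℕ → H)
    (r : ℕ → Finset ℕ) (n₀ : ℕ → ℕ → M) (n₁ : ℕ → ℕ → H),
    coactM m = ∑ j ∈ t, m₀ j ⊗ₜ[k] m₁ j →
    (∀ j ∈ t, coactM (u.unop (m₀ j)) = ∑ l ∈ r j, n₀ j l ⊗ₜ[k] n₁ j l) →
    LinearMap.rTensor H ((LinearMap.applyₗ (R := k) m).comp
        (MulOpposite.opLinearEquiv k).symm.toLinearMap) (coactE u)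
      = ∑ j ∈ t, ∑ l ∈ r j,
          n₀ j l ⊗ₜ[k] (n₁ j l * HopfAlgebra.antipode (R := k) (m₁ j))

/-- `A`, with the Yetter-Drinfeld structure `(act, coact)`, is an algebra in the braided
category of Yetter-Drinfeld modules over `H`. -/
def IsYDAlgebra (Sinv : H → H) {A : Type} [Ring A] [Algebra k A]
    (act : H →ₗ[k] A →ₗ[k] A) (coact : A →ₗ[k] A ⊗[k] H) : Prop :=
  IsYD k H Sinv id id act coact ∧
  (∀ (h : H) (a b : A) (s : Finset ℕ) (p q : ℕ → H),
    Coalgebra.comul (R := k) h = ∑ i ∈ s, p i ⊗ₜ[k] q i →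
    act h (a * b) = ∑ i ∈ s, act (p i) a * act (q i) b) ∧
  (∀ h : H, act h 1 = Coalgebra.counit (R := k) h • (1 : A)) ∧
  (coact 1 = (1 : A) ⊗ₜ[k] (1 : H)) ∧
  (∀ (a b : A) (s t : Finset ℕ) (a₀ : ℕ → A) (a₁ : ℕ → H) (b₀ : ℕ → A) (b₁ : ℕ → H),
    coact a = ∑ i ∈ s, a₀ i ⊗ₜ[k] a₁ i →
    coact b = ∑ j ∈ t, b₀ j ⊗ₜ[k] b₁ j →
    coact (a * b) = ∑ i ∈ s, ∑ j ∈ t, (a₀ i * b₀ j) ⊗ₜ[k] (b₁ j * a₁ i))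

/-- Characterization of the smash product multiplication
`(a # b)(a' # b') = a a'₍₀₎ # (a'₍₁₎ · b) b'` on `A ⊗ B`. -/
def SmashMulChar {A B : Type} [Ring A] [Algebra k A] [Ring B] [Algebra k B]
    (actB : H →ₗ[k] B →ₗ[k] B) (coactA : A →ₗ[k] A ⊗[k] H)
    (mul : (A ⊗[k] B) →ₗ[k] (A ⊗[k] B) →ₗ[k] (A ⊗[k] B)) : Prop :=
  ∀ (a a' : A) (b b' : B) (t : Finset ℕ) (a₀ : ℕ → A) (a₁ : ℕ → H),
    coactA a' = ∑ j ∈ t, a₀ j ⊗ₜ[k] a₁ j →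
    mul (a ⊗ₜ[k] b) (a' ⊗ₜ[k] b') = ∑ j ∈ t, (a * a₀ j) ⊗ₜ[k] (actB (a₁ j) b * b')

end GYD

/-!
A Hopf automorphism `φ` commutes with the antipode, since `φ ∘ S` and `S ∘ φ` are a left and a
right convolution inverse of `φ`. Hence the action of `H_{α,β}` precomposed with `α⁻¹` is the
action of `H_{βα⁻¹}`, and the action on `End(M)` only involves this precomposed action. The
coactions on `End(H)` are given by the same formula in both cases, and for finite-dimensional
`M` an element of `End(M) ⊗ H` is determined by its evaluations at the points of `M`.
-/

namespace TensorProduct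

variable {R M : Type*} [CommSemiring R] [AddCommMonoid M] [Module R M]

theorem exists_finset_nat {N : Type*} [AddCommMonoid N] [Module R N] (x : M ⊗[R] N) :
    ∃ (s : Finset ℕ) (p : ℕ → M) (q : ℕ → N), x = ∑ i ∈ s, p i ⊗ₜ[R] q i := by
  classical
  obtain ⟨S, rfl⟩ := exists_finset x
  let e := S.equivFin.symm
  refine ⟨Finset.range S.card, fun i => if h : i < S.card then (e ⟨i, h⟩).1.1 else 0,
    fun i => if h : i < S.card then (e ⟨i, h⟩).1.2 else 0, ?_⟩
  rw [← Fin.sum_univ_eq_sum_range, ← Finset.sum_coe_sort, ← e.sum_comp]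
  simp

theorem ext_rTensor_applyₗ {P Q : Type*} [AddCommMonoid P] [Module R P] [AddCommMonoid Q]
    [Module R Q] [Module.Finite R M] [Module.Projective R M] {x y : (M →ₗ[R] P) ⊗[R] Q}
    (h : ∀ m : M, (LinearMap.applyₗ m).rTensor Q x = (LinearMap.applyₗ m).rTensor Q y) :
    x = y := by
  have eval_eq : ∀ (z : (M →ₗ[R] P) ⊗[R] Q) (m : M),
      rTensorHomEquivHomRTensor R M P Q z m = (LinearMap.applyₗ m).rTensor Q z := by
    intro z m
    induction z using TensorProduct.induction_on with
    | zero => simp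
    | tmul f q => simp
    | add z w hz hw => simp only [map_add, LinearMap.add_apply, hz, hw]
  exact (rTensorHomEquivHomRTensor R M P Q).injective <| LinearMap.ext fun m => by
    rw [eval_eq, eval_eq, h]

end TensorProduct

section Antipode

open HopfAlgebra WithConv

variable {R A B : Type*} [CommSemiring R] [Semiring A] [Semiring B]
  [HopfAlgebra R A] [HopfAlgebra R B]

theorem BialgHom.antipode_comp (f : A →ₐc[R] B) :
    antipode R ∘ₗ (f : A →ₗ[R] B) = (f : A →ₗ[R] B) ∘ₗ antipode R := by
  have left_inv : toConv ((f : A →ₗ[R] B) ∘ₗ antipode R) * toConv (f : A →ₗ[R] B) = 1 := by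
    apply ofConv_injective
    have := LinearMap.algHom_comp_convMul_distrib (AlgHomClass.toAlgHom f)
      (toConv (antipode R)) (toConv .id)
    rw [LinearMap.antipode_mul_id, LinearMap.algHom_comp_convOne] at this
    exact this.symm
  have right_inv : toConv (f : A →ₗ[R] B) * toConv (antipode R ∘ₗ (f : A →ₗ[R] B)) = 1 := by
    apply ofConv_injective
    have := LinearMap.convMul_comp_coalgHom_distrib (toConv .id) (toConv (antipode R))
      (f : A →ₗc[R] B)
    rw [LinearMap.id_mul_antipode, LinearMap.convOne_comp_coalgHom] at this
    exact this.symm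
  exact congrArg ofConv (left_inv_eq_right_inv left_inv right_inv).symm

theorem BialgHom.map_antipode (f : A →ₐc[R] B) (a : A) :
    f (antipode R a) = antipode R (f a) :=
  (LinearMap.congr_fun f.antipode_comp a).symm

end Antipode

namespace GYD

variable {k H : Type} [Field k] [Ring H] [HopfAlgebra k H]

def IsHopfAut.toBialgHom {φ : H ≃ₗ[k] H} (hφ : IsHopfAut k H φ) : H →ₐc[k] H where
  toLinearMap := φ.toLinearMap
  map_one' := hφ.2.1
  map_mul' := hφ.1
  counit_comp := LinearMap.ext hφ.2.2.2
  map_comp_comul := LinearMap.ext fun h => (hφ.2.2.1 h).symm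

theorem IsHopfAut.map_antipodeInv {φ : H ≃ₗ[k] H} (hφ : IsHopfAut k H φ) {Sinv : H → H}
    (hS : IsAntipodeInv k H Sinv) (a : H) : φ (Sinv a) = Sinv (φ a) := by
  have h : φ (HopfAlgebra.antipode k (Sinv a)) = HopfAlgebra.antipode k (φ (Sinv a)) :=
    hφ.toBialgHom.map_antipode (Sinv a)
  rw [hS.1] at h
  rw [h, hS.2]

theorem EndActChar.eq_of_twisted_act_eq {θ₁ θ₂ : H → H} {M : Type} [AddCommGroup M] [Module k M]
    {act₁ act₂ : H →ₗ[k] M →ₗ[k] M} {actE₁ actE₂ : H →ₗ[k] Module.End k M →ₗ[k] Module.End k M}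
    (h₁ : EndActChar k H θ₁ act₁ actE₁) (h₂ : EndActChar k H θ₂ act₂ actE₂)
    (hθ : ∀ g m, act₁ (θ₁ g) m = act₂ (θ₂ g) m) : actE₁ = actE₂ := by
  ext h u m
  obtain ⟨s, p, q, hpq⟩ := TensorProduct.exists_finset_nat (Coalgebra.comul (R := k) h)
  rw [h₁ h u m s p q hpq, h₂ h u m s p q hpq]
  simp only [hθ]

theorem EndCoactChar.unique {Sinv : H → H} {M : Type} [AddCommGroup M] [Module k M]
    [FiniteDimensional k M] {coactM : M →ₗ[k] M ⊗[k] H}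
    {coactE₁ coactE₂ : Module.End k M →ₗ[k] Module.End k M ⊗[k] H}
    (h₁ : EndCoactChar k H Sinv coactM coactE₁) (h₂ : EndCoactChar k H Sinv coactM coactE₂) :
    coactE₁ = coactE₂ := by
  refine LinearMap.ext fun u => TensorProduct.ext_rTensor_applyₗ fun m => ?_
  obtain ⟨t, m₀, m₁, hm⟩ := TensorProduct.exists_finset_nat (coactM m)
  choose r n₀ n₁ hn using fun j => TensorProduct.exists_finset_nat (coactM (u (m₀ j)))
  rw [h₁ u m t m₀ m₁ r n₀ n₁ hm fun j _ => hn j, h₂ u m t m₀ m₁ r n₀ n₁ hm fun j _ => hn j]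

end GYD

theorem statement_10_general
    (k H : Type) [Field k] [Ring H] [HopfAlgebra k H] [FiniteDimensional k H]
    (Sinv : H → H) (hS : GYD.IsAntipodeInv k H Sinv)
    (α β : H ≃ₗ[k] H)
    (hα : GYD.IsHopfAut k H α)
    -- the module H_{α,β} : action h · h' = β(h₂) h' α(Sinv(h₁)), regular coaction
    (act₁ : H →ₗ[k] H →ₗ[k] H)
    (hact₁ : ∀ (h h' : H) (s : Finset ℕ) (p q : ℕ → H),
        Coalgebra.comul (R := k) h = ∑ i ∈ s, p i ⊗ₜ[k] q i →
        act₁ h h' = ∑ i ∈ s, β (q i) * h' * α (Sinv (p i)))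
    -- the module H_{βα⁻¹} = H_{id, βα⁻¹} : action h · h' = βα⁻¹(h₂) h' Sinv(h₁)
    (act₂ : H →ₗ[k] H →ₗ[k] H)
    (hact₂ : ∀ (h h' : H) (s : Finset ℕ) (p q : ℕ → H),
        Coalgebra.comul (R := k) h = ∑ i ∈ s, p i ⊗ₜ[k] q i →
        act₂ h h' = ∑ i ∈ s, β (α.symm (q i)) * h' * Sinv (p i))
    -- End(H_{α,β})
    (actE₁ : H →ₗ[k] Module.End k H →ₗ[k] Module.End k H)
    (coactE₁ : Module.End k H →ₗ[k] Module.End k H ⊗[k] H)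
    (hactE₁ : GYD.EndActChar k H ⇑α.symm act₁ actE₁)
    (hcoactE₁ : GYD.EndCoactChar k H Sinv (Coalgebra.comul (R := k)) coactE₁)
    -- End(H_{βα⁻¹})
    (actE₂ : H →ₗ[k] Module.End k H →ₗ[k] Module.End k H)
    (coactE₂ : Module.End k H →ₗ[k] Module.End k H ⊗[k] H)
    (hactE₂ : GYD.EndActChar k H id act₂ actE₂)
    (hcoactE₂ : GYD.EndCoactChar k H Sinv (Coalgebra.comul (R := k)) coactE₂) :
    actE₁ = actE₂ ∧ coactE₁ = coactE₂ := by
  have act_eq : ∀ g x, act₁ g x = act₂ (α g) x := by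
    intro g x
    obtain ⟨s, p, q, hpq⟩ := TensorProduct.exists_finset_nat (Coalgebra.comul (R := k) g)
    have comul_α : Coalgebra.comul (R := k) (α g) = ∑ i ∈ s, α (p i) ⊗ₜ[k] α (q i) := by
      simp [hα.2.2.1, hpq]
    rw [hact₁ g x s p q hpq, hact₂ (α g) x s _ _ comul_α]
    simp only [LinearEquiv.symm_apply_apply, ← hα.map_antipodeInv hS]
  refine ⟨hactE₁.eq_of_twisted_act_eq hactE₂ fun g x => ?_, hcoactE₁.unique hcoactE₂⟩
  rw [act_eq, LinearEquiv.apply_symm_apply, id]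

theorem statement_10
    (k H : Type) [Field k] [Ring H] [HopfAlgebra k H] [FiniteDimensional k H]
    (Sinv : H → H) (hS : GYD.IsAntipodeInv k H Sinv)
    (α β : H ≃ₗ[k] H)
    (hα : GYD.IsHopfAut k H α) (hβ : GYD.IsHopfAut k H β)
    -- the module H_{α,β} : action h · h' = β(h₂) h' α(Sinv(h₁)), regular coaction
    (act₁ : H →ₗ[k] H →ₗ[k] H)
    (hact₁ : ∀ (h h' : H) (s : Finset ℕ) (p q : ℕ → H),
        Coalgebra.comul (R := k) h = ∑ i ∈ s, p i ⊗ₜ[k] q i →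
        act₁ h h' = ∑ i ∈ s, β (q i) * h' * α (Sinv (p i)))
    -- the module H_{βα⁻¹} = H_{id, βα⁻¹} : action h · h' = βα⁻¹(h₂) h' Sinv(h₁)
    (act₂ : H →ₗ[k] H →ₗ[k] H)
    (hact₂ : ∀ (h h' : H) (s : Finset ℕ) (p q : ℕ → H),
        Coalgebra.comul (R := k) h = ∑ i ∈ s, p i ⊗ₜ[k] q i →
        act₂ h h' = ∑ i ∈ s, β (α.symm (q i)) * h' * Sinv (p i))
    -- End(H_{α,β})
    (actE₁ : H →ₗ[k] Module.End k H →ₗ[k] Module.End k H)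
    (coactE₁ : Module.End k H →ₗ[k] Module.End k H ⊗[k] H)
    (hactE₁ : GYD.EndActChar k H ⇑α.symm act₁ actE₁)
    (hcoactE₁ : GYD.EndCoactChar k H Sinv (Coalgebra.comul (R := k)) coactE₁)
    -- End(H_{βα⁻¹})
    (actE₂ : H →ₗ[k] Module.End k H →ₗ[k] Module.End k H)
    (coactE₂ : Module.End k H →ₗ[k] Module.End k H ⊗[k] H)
    (hactE₂ : GYD.EndActChar k H id act₂ actE₂)
    (hcoactE₂ : GYD.EndCoactChar k H Sinv (Coalgebra.comul (R := k)) coactE₂) :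
    actE₁ = actE₂ ∧ coactE₁ = coactE₂ :=
  statement_10_general k H Sinv hS α β hα act₁ hact₁ act₂ hact₂ actE₁ coactE₁ hactE₁ hcoactE₁ actE₂
    coactE₂ hactE₂ hcoactE₂

end
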